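/- Let R be a right perfect ring, i.e. the Jacobson radical J of R is right T-nilpotent and R/J is a semisimple ring. Then every right R-module is regularly weakly based if and only if every right module over the semisimple ring R/J is regularly weakly based. -/
import Mathlib


/-- A weak basis of a module: a weakly independent generating set. -/
def IsWeakBasis (R : Type*) [Semiring R] {M : Type*} [AddCommMonoid M]
    [Module R M] (X : Set M) : Prop :=
  (∀ x ∈ X, x ∉ Submodule.span R (X \ {x})) ∧ Submodule.span R X = ⊤

/-- A module is regularly weakly based if every generating set contains a weak basis. -/
def RegularlyWeaklyBased (R : Type*) [Semiring R] (M : Type*) [AddCommMonoid M]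
    [Module R M] : Prop :=
  ∀ X : Set M, Submodule.span R X = ⊤ → ∃ W ⊆ X, IsWeakBasis R W

/-- `tProd a n = a n * a (n-1) * ⋯ * a 1` (and `1` for `n = 0`). -/
def tProd {R : Type*} [Ring R] (a : ℕ → R) : ℕ → R
  | 0 => 1
  | n + 1 => a (n + 1) * tProd a n

/-- A set `S ⊆ R` is right T-nilpotent if for every sequence `a₁, a₂, …` of elements
of `S` there is `n ≥ 1` with `aₙ ⋯ a₂ a₁ = 0`. -/
def IsRightTNilpotent {R : Type*} [Ring R] (S : Set R) : Prop :=
  ∀ a : ℕ → R, (∀ n, 1 ≤ n → a n ∈ S) → ∃ n, 1 ≤ n ∧ tProd a n = 0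

open MulOpposite Submodule Finset

/-- The set `Q·J` inside a right module `Q`. -/
def smulJSet {R : Type*} [Ring R] (J : TwoSidedIdeal R) (Q : Type*) [AddCommGroup Q]
    [Module Rᵐᵒᵖ Q] : Set Q :=
  {x : Q | ∃ j ∈ (J : Set R), ∃ m : Q, x = (op j) • m}

theorem eq_zero_of_tnil {R : Type*} [Ring R] (J : TwoSidedIdeal R)
    (hT : IsRightTNilpotent (J : Set R)) (Q : Type*) [AddCommGroup Q] [Module Rᵐᵒᵖ Q]
    (hQ : span Rᵐᵒᵖ (smulJSet J Q) = ⊤) : ∀ q : Q, q = 0 := by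
  classical
  -- Step 1: representation of every element
  have rep : ∀ q : Q, ∃ (k : ℕ) (y : ℕ → Q) (a : ℕ → R),
      (∀ i, a i ∈ J) ∧ q = ∑ i ∈ Finset.range k, (op (a i)) • y i := by
    intro q
    have hq : q ∈ span Rᵐᵒᵖ (smulJSet J Q) := hQ ▸ mem_top
    obtain ⟨n, f, g, hsum⟩ := Submodule.mem_span_set'.mp hq
    have hg : ∀ i : Fin n, ∃ j ∈ (J : Set R), ∃ m : Q, (g i : Q) = (op j) • m :=
      fun i => (g i).2
    choose j hjJ m hm using hg
    refine ⟨n, fun i => if h : i < n then m ⟨i, h⟩ else 0,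
      fun i => if h : i < n then j ⟨i, h⟩ * (f ⟨i, h⟩).unop else 0, ?_, ?_⟩
    · intro i
      by_cases h : i < n
      · simp only [dif_pos h]
        exact J.mul_mem_right _ _ (hjJ _)
      · simp only [dif_neg h]
        exact J.zero_mem
    · rw [← hsum, Finset.sum_range]
      refine Finset.sum_congr rfl fun i _ => ?_
      simp only [Fin.is_lt, dif_pos, Fin.eta]
      rw [hm i, smul_smul, op_mul, op_unop]
  choose k y a haJ hrep using rep
  intro q₀
  by_contra hq₀
  -- the tree
  set node : List ℕ → Q × R :=
    fun l => l.foldr (fun i st => (y st.1 i, a st.1 i * st.2)) (q₀, 1) with hnode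
  have node_nil : node [] = (q₀, 1) := rfl
  have node_cons : ∀ i l, node (i :: l) = (y (node l).1 i, a (node l).1 i * (node l).2) :=
    fun i l => rfl
  set P : ℕ → Finset (List ℕ) := fun n => Nat.rec {([] : List ℕ)}
    (fun _ Pn => Pn.biUnion fun l => (Finset.range (k (node l).1)).image fun i => i :: l) n
    with hP
  have P0 : P 0 = {([] : List ℕ)} := rfl
  have Psucc : ∀ n, P (n + 1) =
      (P n).biUnion (fun l => (Finset.range (k (node l).1)).image fun i => i :: l) :=
    fun n => rfl
  have len : ∀ n, ∀ l ∈ P n, l.length = n := by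
    intro n
    induction n with
    | zero => intro l hl; rw [P0, Finset.mem_singleton] at hl; simp [hl]
    | succ n ih =>
      intro l hl
      rw [Psucc, Finset.mem_biUnion] at hl
      obtain ⟨l', hl', hmem⟩ := hl
      rw [Finset.mem_image] at hmem
      obtain ⟨i, _, rfl⟩ := hmem
      simp [ih l' hl']
  have consP : ∀ n i l, (i :: l) ∈ P (n + 1) → l ∈ P n ∧ i < k (node l).1 := by
    intro n i l h
    rw [Psucc, Finset.mem_biUnion] at h
    obtain ⟨l', hl', hmem⟩ := h
    rw [Finset.mem_image] at hmem
    obtain ⟨i', hi', heq⟩ := hmem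
    obtain ⟨rfl, rfl⟩ : i' = i ∧ l' = l := by
      constructor <;> [exact (List.cons.injEq _ _ _ _ ▸ heq).1; exact (List.cons.injEq _ _ _ _ ▸ heq).2]
    exact ⟨hl', Finset.mem_range.mp hi'⟩
  have sumId : ∀ n, q₀ = ∑ l ∈ P n, (op (node l).2) • (node l).1 := by
    intro n
    induction n with
    | zero => simp [P0, node_nil]
    | succ n ih =>
      rw [Psucc]
      rw [Finset.sum_biUnion]
      · calc q₀ = ∑ l ∈ P n, (op (node l).2) • (node l).1 := ih
          _ = _ := by
            refine Finset.sum_congr rfl fun l _ => ?_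
            rw [Finset.sum_image (by intro i _ i' _ h; exact (List.cons.injEq _ _ _ _ ▸ h).1)]
            have expand : (node l).1 = ∑ i ∈ Finset.range (k (node l).1),
                (op (a (node l).1 i)) • y (node l).1 i := hrep (node l).1
            conv_lhs => rw [expand]
            rw [Finset.smul_sum]
            refine Finset.sum_congr rfl fun i _ => ?_
            rw [node_cons, smul_smul, ← op_mul]
      · intro l₁ h₁ l₂ h₂ hne
        refine Finset.disjoint_left.mpr ?_
        intro x hx₁ hx₂
        rw [Finset.mem_image] at hx₁ hx₂
        obtain ⟨i₁, _, rfl⟩ := hx₁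
        obtain ⟨i₂, _, heq⟩ := hx₂
        exact hne ((List.cons.injEq _ _ _ _ ▸ heq).2 ▸ rfl)
  have exVal : ∀ n, ∃ l ∈ P n, (node l).2 ≠ 0 := by
    intro n
    by_contra h
    push_neg at h
    apply hq₀
    rw [sumId n]
    refine Finset.sum_eq_zero fun l hl => ?_
    rw [h l hl, op_zero, zero_smul]
  have prodZero : ∀ (t l : List ℕ), (node l).2 = 0 → (node (t ++ l)).2 = 0 := by
    intro t
    induction t with
    | nil => intro l h; simpa using h
    | cons i t ih =>
      intro l h
      rw [List.cons_append, node_cons, ih l h, mul_zero]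
  have smem : ∀ n, ∀ l ∈ P n, ∀ t s : List ℕ, l = t ++ s → s ∈ P s.length := by
    intro n
    induction n with
    | zero =>
      intro l hl t s heq
      rw [P0, Finset.mem_singleton] at hl
      subst hl
      rcases List.append_eq_nil_iff.mp heq.symm with ⟨ht, hs⟩
      subst hs
      simp only [List.length_nil, P0]
      exact Finset.mem_singleton_self _
    | succ n ih =>
      intro l hl t s heq
      rw [Psucc, Finset.mem_biUnion] at hl
      obtain ⟨l', hl', hmem⟩ := hl
      rw [Finset.mem_image] at hmem
      obtain ⟨i, hi, rfl⟩ := hmem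
      cases t with
      | nil =>
        simp only [List.nil_append] at heq
        subst heq
        have hlen : (i :: l').length = n + 1 := by simp [len n _ hl']
        rw [hlen, Psucc, Finset.mem_biUnion]
        exact ⟨l', hl', Finset.mem_image.mpr ⟨i, hi, rfl⟩⟩
      | cons j t' =>
        rw [List.cons_append, List.cons.injEq] at heq
        exact ih l' hl' t' s heq.2
  -- Good nodes
  set Good : List ℕ → Prop := fun l => ∀ jd : ℕ, ∃ t : List ℕ, t.length = jd ∧
      (t ++ l) ∈ P (t ++ l).length ∧ (node (t ++ l)).2 ≠ 0 with hGood
  have good_nil : Good [] := by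
    intro jd
    obtain ⟨l, hl, hv⟩ := exVal jd
    refine ⟨l, len jd l hl, ?_, ?_⟩
    · rw [List.append_nil, len jd l hl]; exact len jd l hl ▸ hl
    · rw [List.append_nil]; exact hv
  have good_self : ∀ l, Good l → l ∈ P l.length ∧ (node l).2 ≠ 0 := by
    intro l hg
    obtain ⟨t, ht, hmem, hv⟩ := hg 0
    rw [List.length_eq_zero_iff] at ht
    subst ht
    rw [List.nil_append] at hmem hv
    exact ⟨hmem, hv⟩
  have good_step : ∀ l, Good l → ∃ i, Good (i :: l) := by
    intro l hg
    by_contra h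
    push_neg at h
    simp only [hGood] at h
    push_neg at h
    choose jd hjd using h
    set K := k (node l).1 with hK
    set B := (Finset.range K).sup jd with hB
    obtain ⟨t, htlen, hmem, hv⟩ := hg (B + 1)
    obtain rfl | ⟨t₁, i, rfl⟩ := t.eq_nil_or_concat
    · simp at htlen
    have htl : t₁.concat i ++ l = t₁ ++ (i :: l) := by simp
    have ht₁len : t₁.length = B := by simpa using htlen
    -- i < K
    have hiK : i < K := by
      have hs : (i :: l) ∈ P (i :: l).length :=
        smem _ _ hmem t₁ (i :: l) (by rw [htl])
      exact (consP l.length i l hs).2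
    have hjle : jd i ≤ B := Finset.le_sup (Finset.mem_range.mpr hiK)
    -- descendant of (i :: l) at depth jd i
    set t₂ := t₁.drop (t₁.length - jd i) with ht₂
    have ht₂len : t₂.length = jd i := by
      rw [ht₂, List.length_drop, ht₁len]
      omega
    have hsplit : t₁ = t₁.take (t₁.length - jd i) ++ t₂ := (List.take_append_drop _ _).symm
    have hdec : t₁ ++ (i :: l) = t₁.take (t₁.length - jd i) ++ (t₂ ++ (i :: l)) := by
      conv_lhs => rw [hsplit]
      rw [List.append_assoc]
    have hmem' : (t₂ ++ (i :: l)) ∈ P (t₂ ++ (i :: l)).length := by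
      refine smem _ _ hmem (t₁.take (t₁.length - jd i)) (t₂ ++ (i :: l)) ?_
      rw [htl, hdec]
    have hv' : (node (t₂ ++ (i :: l))).2 ≠ 0 := by
      intro h0
      apply hv
      rw [htl, hdec]
      exact prodZero _ _ h0
    exact hv' (hjd i t₂ ht₂len hmem')
  -- build the branch
  have hstep : ∀ p : {l : List ℕ // Good l}, ∃ i, Good (i :: p.1) := fun p => good_step p.1 p.2
  set g : ℕ → {l : List ℕ // Good l} := fun n => Nat.rec ⟨[], good_nil⟩
    (fun _ p => ⟨(hstep p).choose :: p.1, (hstep p).choose_spec⟩) n with hg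
  have gsucc : ∀ n, (g (n + 1)).1 = (hstep (g n)).choose :: (g n).1 := fun n => rfl
  set aseq : ℕ → R := fun n => match n with
    | 0 => 0
    | n + 1 => a (node (g n).1).1 ((hstep (g n)).choose) with haseq
  have haseqJ : ∀ n, 1 ≤ n → aseq n ∈ (J : Set R) := by
    intro n hn
    match n with
    | n + 1 => exact haJ _ _
  have htp : ∀ n, tProd aseq n = (node (g n).1).2 := by
    intro n
    induction n with
    | zero => rfl
    | succ n ih =>
      rw [tProd, ih, gsucc, node_cons]
  obtain ⟨n, hn1, hn0⟩ := hT aseq haseqJ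
  have := (good_self _ (g n).2).2
  rw [← htp] at this
  exact this hn0

theorem sup_smulJ_nakayama {R : Type*} [Ring R] (J : TwoSidedIdeal R)
    (hT : IsRightTNilpotent (J : Set R)) {M : Type*} [AddCommGroup M] [Module Rᵐᵒᵖ M]
    (N : Submodule Rᵐᵒᵖ M) (h : N ⊔ span Rᵐᵒᵖ (smulJSet J M) = ⊤) : N = ⊤ := by
  have hQ : span Rᵐᵒᵖ (smulJSet J (M ⧸ N)) = ⊤ := by
    rw [eq_top_iff']
    intro q
    obtain ⟨m, rfl⟩ := N.mkQ_surjective q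
    have hm : m ∈ N ⊔ span Rᵐᵒᵖ (smulJSet J M) := h ▸ mem_top
    obtain ⟨n, hn, z, hz, rfl⟩ := Submodule.mem_sup.mp hm
    have h1 : N.mkQ (n + z) = N.mkQ z := by
      have hn0 : N.mkQ n = 0 := (Submodule.Quotient.mk_eq_zero N).mpr hn
      rw [map_add, hn0, zero_add]
    rw [h1]
    have h2 : N.mkQ z ∈ Submodule.map N.mkQ (span Rᵐᵒᵖ (smulJSet J M)) :=
      Submodule.mem_map_of_mem hz
    rw [Submodule.map_span] at h2
    refine span_mono ?_ h2
    rintro x ⟨w, ⟨j, hj, m', rfl⟩, rfl⟩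
    exact ⟨j, hj, N.mkQ m', by rw [map_smul]⟩
  have hzero := eq_zero_of_tnil J hT (M ⧸ N) hQ
  rw [eq_top_iff']
  intro m
  have := hzero (N.mkQ m)
  rwa [← Submodule.Quotient.mk_eq_zero N]

theorem span_carrier_iff {R S M : Type*} [Semiring R] [Semiring S] [AddCommMonoid M]
    [Module R M] [Module S M] (f : R →+* S) (hf : Function.Surjective f)
    (h : ∀ (r : R) (x : M), f r • x = r • x) (X : Set M) :
    ∀ m : M, m ∈ span R X ↔ m ∈ span S X := by
  intro m
  constructor
  · intro hm
    induction hm using Submodule.span_induction with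
    | mem x hx => exact subset_span hx
    | zero => exact zero_mem _
    | add x y _ _ hx hy => exact add_mem hx hy
    | smul r x _ hx => rw [← h]; exact Submodule.smul_mem _ _ hx
  · intro hm
    induction hm using Submodule.span_induction with
    | mem x hx => exact subset_span hx
    | zero => exact zero_mem _
    | add x y _ _ hx hy => exact add_mem hx hy
    | smul s x _ hx =>
      obtain ⟨r, rfl⟩ := hf s
      rw [h]
      exact Submodule.smul_mem _ _ hx

theorem rwb_of_rwb {R S M : Type*} [Semiring R] [Semiring S] [AddCommMonoid M]
    [Module R M] [Module S M]
    (hspan : ∀ (X : Set M) (m : M), m ∈ span R X ↔ m ∈ span S X) :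
    RegularlyWeaklyBased R M → RegularlyWeaklyBased S M := by
  intro hr X hX
  have hX' : span R X = ⊤ := by
    rw [eq_top_iff']; intro m; rw [hspan]; exact hX ▸ mem_top
  obtain ⟨W, hWX, hWind, hWspan⟩ := hr X hX'
  refine ⟨W, hWX, ?_, ?_⟩
  · intro x hx hmem
    exact hWind x hx ((hspan _ x).mpr hmem)
  · rw [eq_top_iff']; intro m; rw [← hspan]; exact hWspan ▸ mem_top


/-- Let `R` be a right perfect ring, i.e. its Jacobson radical `J` is right T-nilpotent
and `R/J` is semisimple. Then every right `R`-module is regularly weakly based iff every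
right `R/J`-module is regularly weakly based. Right modules are `ᵐᵒᵖ`-modules. -/
theorem forall_regularlyWeaklyBased_iff_of_rightPerfect.{u}
    (R : Type u) [Ring R] (J : TwoSidedIdeal R)
    (hJ : J = TwoSidedIdeal.jacobson ⊥)
    (hTnil : IsRightTNilpotent (J : Set R))
    (hss : IsSemisimpleRing J.ringCon.Quotient) :
    (∀ (M : Type u) [AddCommGroup M] [Module Rᵐᵒᵖ M], RegularlyWeaklyBased Rᵐᵒᵖ M) ↔
    (∀ (N : Type u) [AddCommGroup N] [Module (J.ringCon.Quotient)ᵐᵒᵖ N],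
      RegularlyWeaklyBased (J.ringCon.Quotient)ᵐᵒᵖ N) := by
  classical
  set S := J.ringCon.Quotient with hS
  let π : R →+* S := J.ringCon.mk'
  have hπ : Function.Surjective π := fun x => Quotient.inductionOn x fun r => ⟨r, rfl⟩
  let πo : Rᵐᵒᵖ →+* Sᵐᵒᵖ := RingHom.op π
  have hπo : Function.Surjective πo := fun s => ⟨op ((hπ s.unop).choose),
    by simp [πo, (hπ s.unop).choose_spec]⟩
  constructor
  · -- forward
    intro hR N _ instN
    letI : Module Rᵐᵒᵖ N := Module.compHom N πo
    have hcomp : ∀ (r : Rᵐᵒᵖ) (x : N), πo r • x = r • x := fun _ _ => rfl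
    exact rwb_of_rwb (span_carrier_iff πo hπo hcomp) (hR N)
  · -- backward
    intro hSall M _ _
    intro X hX
    set MJ : Submodule Rᵐᵒᵖ M := span Rᵐᵒᵖ (smulJSet J M) with hMJ
    set Q := M ⧸ MJ with hQdef
    set mk : M →ₗ[Rᵐᵒᵖ] Q := MJ.mkQ with hmk
    have hzero : ∀ (j : R), j ∈ J → ∀ q : Q, (op j) • q = 0 := by
      intro j hj q
      obtain ⟨m, rfl⟩ := MJ.mkQ_surjective q
      rw [← map_smul]
      exact (Submodule.Quotient.mk_eq_zero MJ).mpr (subset_span ⟨j, hj, m, rfl⟩)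
    letI : SMul Sᵐᵒᵖ Q :=
      ⟨fun s q => Quotient.liftOn s.unop (fun r => (op r) • q) (by
        intro r r' hrel
        have hsub : r - r' ∈ J := (TwoSidedIdeal.rel_iff J r r').mp hrel
        have hd : (op r) • q - (op r') • q = (op (r - r')) • q := by
          rw [op_sub, sub_smul]
        rw [hzero _ hsub q] at hd
        exact sub_eq_zero.mp hd)⟩
    have key : ∀ (x : Rᵐᵒᵖ) (q : Q), πo x • q = x • q := fun x q => rfl
    letI : Module Sᵐᵒᵖ Q := hπo.moduleLeft πo key
    have hspanQ := span_carrier_iff πo hπo key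
    -- the image of X spans Q over S
    have hmap : ∀ W : Set M, Submodule.map mk (span Rᵐᵒᵖ W) = span Rᵐᵒᵖ (mk '' W) :=
      fun W => Submodule.map_span mk W
    have hXQ : span Sᵐᵒᵖ (mk '' X) = ⊤ := by
      rw [eq_top_iff']
      intro q
      rw [← hspanQ]
      obtain ⟨m, rfl⟩ := MJ.mkQ_surjective q
      have : mk m ∈ Submodule.map mk (span Rᵐᵒᵖ X) := Submodule.mem_map_of_mem (hX ▸ mem_top)
      rwa [hmap] at this
    obtain ⟨W', hW'X, hW'ind, hW'span⟩ := hSall Q (mk '' X) hXQ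
    -- choose preimages
    have hpre : ∀ q : Q, ∃ m : M, q ∈ W' → (m ∈ X ∧ mk m = q) := by
      intro q
      by_cases hq : q ∈ W'
      · obtain ⟨m, hm, hmq⟩ := hW'X hq
        exact ⟨m, fun _ => ⟨hm, hmq⟩⟩
      · exact ⟨0, fun h => absurd h hq⟩
    choose g hg using hpre
    refine ⟨g '' W', ?_, ?_, ?_⟩
    · rintro x ⟨w, hw, rfl⟩
      exact (hg w hw).1
    · -- weak independence
      rintro x ⟨w₀, hw₀, rfl⟩ hmem
      have himg : mk '' (g '' W' \ {g w₀}) ⊆ W' \ {w₀} := by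
        rintro q ⟨m', ⟨⟨w, hw, rfl⟩, hne⟩, rfl⟩
        rw [(hg w hw).2]
        refine ⟨hw, fun hww => hne ?_⟩
        rw [Set.mem_singleton_iff] at hww
        rw [hww]
        exact Set.mem_singleton _
      have : mk (g w₀) ∈ Submodule.map mk (span Rᵐᵒᵖ (g '' W' \ {g w₀})) :=
        Submodule.mem_map_of_mem hmem
      rw [hmap] at this
      have h2 : mk (g w₀) ∈ span Rᵐᵒᵖ (W' \ {w₀}) := span_mono himg this
      rw [(hg w₀ hw₀).2] at h2
      exact hW'ind w₀ hw₀ ((hspanQ _ w₀).mp h2)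
    · -- spanning
      have hmkW : mk '' (g '' W') = W' := by
        ext q
        constructor
        · rintro ⟨m', ⟨w, hw, rfl⟩, rfl⟩
          rw [(hg w hw).2]; exact hw
        · intro hq
          exact ⟨g q, ⟨q, hq, rfl⟩, (hg q hq).2⟩
      have hmapW : Submodule.map mk (span Rᵐᵒᵖ (g '' W')) = ⊤ := by
        rw [hmap, hmkW, eq_top_iff']
        intro q
        rw [hspanQ]
        exact hW'span ▸ mem_top
      have hsup : span Rᵐᵒᵖ (g '' W') ⊔ MJ = ⊤ := by
        rw [eq_top_iff']
        intro m
        have : mk m ∈ Submodule.map mk (span Rᵐᵒᵖ (g '' W')) := hmapW ▸ mem_top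
        obtain ⟨w, hw, hwm⟩ := this
        have hsub : m - w ∈ MJ := by
          rw [← Submodule.Quotient.mk_eq_zero MJ]
          have : mk (m - w) = mk m - mk w := map_sub mk m w
          rw [show (Submodule.Quotient.mk (m - w) : Q) = mk (m - w) from rfl, this, hwm, sub_self]
        have : m = w + (m - w) := by abel
        rw [this]
        exact add_mem (Submodule.mem_sup_left hw) (Submodule.mem_sup_right hsub)
      exact sup_smulJ_nakayama J hTnil _ hsup
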